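/- arXiv:0710.2258 — 5 statements merged into one kernel-verified Lean document; each statement's English description precedes it below -/
import Mathlib

section
/- Let s ≥ 1, 1 ≤ k ≤ s, let I ⊆ {1,…,s} satisfy |I| ≥ k, let T_1,…,T_s be real numbers, and for every K ⊆ {1,…,s} with |K| ≥ k let ĉ_K be a real number such that ĉ_K ≥ ĉ_I whenever K ⊇ I. If the step-down procedure (Algorithm 2.1) run with statistics (T_i) and critical values (ĉ_K) rejects at least k indices belonging to I, then k-max(T_i : i ∈ I) > ĉ_I. -/
open MeasureTheory Filter

/-- The `k`-th largest of the values `y i`, `i ∈ K` (counted with multiplicity). -/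
noncomputable def kmax {s : ℕ} (k : ℕ) (K : Finset (Fin s)) (y : Fin s → ℝ) : ℝ :=
  ((K.val.map y).sort (· ≤ ·)).getD (K.card - k) 0

/-- The `β`-quantile of a (probability) measure on `ℝ`:
`q_β(L) = inf {x | L((-∞, x]) ≥ β}`. -/
noncomputable def quantile (μ : Measure ℝ) (β : ℝ) : ℝ :=
  sInf {x : ℝ | ENNReal.ofReal β ≤ μ (Set.Iic x)}

/-- The critical value `d̂_{A_j}` of Algorithm 2.1 at a stage where `R` is the set of
previously rejected indices: the maximum of `ĉ_{Rᶜ ∪ I'}` over `I' ⊆ R` with `|I'| = k - 1`. -/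
noncomputable def dcrit {s : ℕ} (k : ℕ) (c : Finset (Fin s) → ℝ) (R : Finset (Fin s)) : ℝ :=
  sSup {x : ℝ | ∃ I' ⊆ R, I'.card = k - 1 ∧ x = c (Rᶜ ∪ I')}

/-- One step of the step-down procedure (Algorithm 2.1): given the set `R` of indices
rejected so far, returns the set of indices rejected after performing the next step. -/
noncomputable def stepDownNext {s : ℕ} (k : ℕ) (c : Finset (Fin s) → ℝ) (T : Fin s → ℝ)
    (R : Finset (Fin s)) : Finset (Fin s) :=
  if R = ∅ then Finset.univ.filter (fun i => c Finset.univ < T i)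
  else if R.card < k then R
  else R ∪ Rᶜ.filter (fun i => dcrit k c R < T i)

/-- The rejection set of the step-down procedure (Algorithm 2.1) with statistics `T` and
critical values `c`. -/
noncomputable def stepDownRejections {s : ℕ} (k : ℕ) (c : Finset (Fin s) → ℝ)
    (T : Fin s → ℝ) : Finset (Fin s) :=
  (stepDownNext k c T)^[s] ∅

/-! If fewer than `k` indices `i ∈ I` had `T i > ĉ_I`, then every index of `I` the procedure
rejects would still have `T i > ĉ_I`: at a step with rejected set `R`, the set `R ∩ I` has at most
`k - 1` elements, so it extends to some `I' ⊆ R` with `|I'| = k - 1`, and then `I ⊆ Rᶜ ∪ I'`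
gives `d̂ ≥ ĉ_{Rᶜ ∪ I'} ≥ ĉ_I` by monotonicity. Hence at least `k` indices of `I` have
`T i > ĉ_I`, which is exactly `k`-max`(T_i : i ∈ I) > ĉ_I`. -/

open Finset

theorem List.Pairwise.countP_lt_le {α : Type*} [LinearOrder α] {l : List α}
    (hl : l.Pairwise (· ≤ ·)) {x : α} {j : ℕ} (hj : j < l.length) (hx : l[j] ≤ x) :
    l.countP (fun a => x < a) ≤ l.length - (j + 1) := by
  have htake : (l.take (j + 1)).countP (fun a => x < a) = 0 := by
    refine List.countP_eq_zero.2 fun a ha => ?_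
    obtain ⟨m, hm, rfl⟩ := List.mem_take_iff_getElem.1 ha
    have hmj : l[m] ≤ l[j] :=
      hl.rel_get_of_le (a := ⟨m, by omega⟩) (b := ⟨j, hj⟩) (by change m ≤ j; omega)
    simpa using hmj.trans hx
  calc l.countP (fun a => x < a)
      = (l.take (j + 1)).countP (fun a => x < a) + (l.drop (j + 1)).countP (fun a => x < a) := by
        rw [← List.countP_append, List.take_append_drop]
    _ ≤ (l.drop (j + 1)).length := by rw [htake, zero_add]; exact List.countP_le_length
    _ = l.length - (j + 1) := List.length_drop

theorem lt_kmax_of_le_card_filter {s k : ℕ} (hk : 1 ≤ k) {I : Finset (Fin s)} {T : Fin s → ℝ}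
    {x : ℝ} (h : k ≤ #{i ∈ I | x < T i}) : x < kmax k I T := by
  set l := (I.val.map T).sort (· ≤ ·)
  have hsorted : l.Pairwise (· ≤ ·) := Multiset.pairwise_sort _ _
  have hcount : l.countP (fun a => x < a) = #{i ∈ I | x < T i} := by
    rw [← Multiset.coe_countP .., Multiset.sort_eq, Multiset.countP_map]; rfl
  have hlen : l.length = #I := by simp [l]
  have hkI : k ≤ #I := h.trans (card_filter_le _ _)
  have hidx : #I - k < l.length := by omega
  rw [kmax, List.getD_eq_getElem _ _ hidx]
  by_contra! hle
  have := hsorted.countP_lt_le hidx hle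
  omega

section StepDown

variable {s k : ℕ} {c : Finset (Fin s) → ℝ} {T : Fin s → ℝ}

theorem le_dcrit {R I' : Finset (Fin s)} (hI'R : I' ⊆ R) (hI' : #I' = k - 1) :
    c (Rᶜ ∪ I') ≤ dcrit k c R := by
  have hfin : {x : ℝ | ∃ I' ⊆ R, #I' = k - 1 ∧ x = c (Rᶜ ∪ I')}.Finite :=
    (Set.finite_range fun I' => c (Rᶜ ∪ I')).subset (by rintro _ ⟨I', -, -, rfl⟩; exact ⟨I', rfl⟩)
  exact le_csSup hfin.bddAbove ⟨I', hI'R, hI', rfl⟩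

theorem stepDownNext_inter_subset_filter {I R : Finset (Fin s)}
    (hmono : ∀ K : Finset (Fin s), I ⊆ K → c I ≤ c K) (hsmall : #{i ∈ I | c I < T i} < k)
    (hR : R ∩ I ⊆ {i ∈ I | c I < T i}) :
    stepDownNext k c T R ∩ I ⊆ {i ∈ I | c I < T i} := by
  intro i hi
  obtain ⟨hiR', hiI⟩ := mem_inter.1 hi
  refine mem_filter.2 ⟨hiI, ?_⟩
  have of_mem_R : i ∈ R → c I < T i := fun hiR => (mem_filter.1 (hR (mem_inter.2 ⟨hiR, hiI⟩))).2
  unfold stepDownNext at hiR'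
  split_ifs at hiR'
  · exact (hmono _ (subset_univ I)).trans_lt (mem_filter.1 hiR').2
  · exact of_mem_R hiR'
  rcases mem_union.1 hiR' with hiR | hiRc
  · exact of_mem_R hiR
  obtain ⟨I', hRI', hI'R, hI'⟩ :=
    exists_subsuperset_card_eq (n := k - 1) (inter_subset_left : R ∩ I ⊆ R)
    (by have := card_le_card hR; omega) (by omega)
  have hII' : I ⊆ Rᶜ ∪ I' := fun j hj => by
    by_cases hjR : j ∈ R
    · exact mem_union_right _ (hRI' (mem_inter.2 ⟨hjR, hj⟩))
    · exact mem_union_left _ (mem_compl.2 hjR)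
  exact ((hmono _ hII').trans (le_dcrit hI'R hI')).trans_lt (mem_filter.1 hiRc).2

theorem iterate_stepDownNext_inter_subset_filter {I : Finset (Fin s)}
    (hmono : ∀ K : Finset (Fin s), I ⊆ K → c I ≤ c K) (hsmall : #{i ∈ I | c I < T i} < k)
    (n : ℕ) : (stepDownNext k c T)^[n] ∅ ∩ I ⊆ {i ∈ I | c I < T i} := by
  induction n with
  | zero => simp
  | succ n ih =>
    rw [Function.iterate_succ_apply']
    exact stepDownNext_inter_subset_filter hmono hsmall ih

end StepDown

theorem stmt0_general {s k : ℕ} (hk1 : 1 ≤ k)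
    (I : Finset (Fin s))
    (T : Fin s → ℝ) (c : Finset (Fin s) → ℝ)
    (hmono : ∀ K : Finset (Fin s), I ⊆ K → c I ≤ c K)
    (hrej : k ≤ ((stepDownRejections k c T) ∩ I).card) :
    c I < kmax k I T := by
  refine lt_kmax_of_le_card_filter hk1 ?_
  by_contra! hsmall
  have hsub := iterate_stepDownNext_inter_subset_filter hmono hsmall s
  exact (hrej.trans (card_le_card hsub)).not_gt hsmall

/-- if the step-down procedure (Algorithm 2.1), run with statistics `T` and
monotone critical values `c`, rejects at least `k` indices belonging to `I`,
then `k`-max`(T_i : i ∈ I) > ĉ_I`. -/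
theorem stmt0 {s k : ℕ} (hs : 1 ≤ s) (hk1 : 1 ≤ k) (hks : k ≤ s)
    (I : Finset (Fin s)) (hI : k ≤ I.card)
    (T : Fin s → ℝ) (c : Finset (Fin s) → ℝ)
    (hmono : ∀ K : Finset (Fin s), I ⊆ K → c I ≤ c K)
    (hrej : k ≤ ((stepDownRejections k c T) ∩ I).card) :
    c I < kmax k I T :=
  stmt0_general hk1 I T c hmono hrej
end

section
/- (Theorem 2.1) Let (Ω, 𝓕, P) be a probability space, s ≥ 1, 1 ≤ k ≤ s, and let I ⊆ {1,…,s} with |I| ≥ k be the indices of the true hypotheses. Let T_1,…,T_s : Ω → ℝ and, for every K ⊆ {1,…,s} with |K| ≥ k, ĉ_K : Ω → ℝ be measurable maps satisfying ĉ_K(ω) ≥ ĉ_I(ω) for every ω and every K ⊇ I. Run the step-down procedure (Algorithm 2.1) with statistics T_i(ω) and critical values ĉ_K(ω). Then (i) P{at least k indices in I are rejected} ≤ P{k-max(T_i : i ∈ I) > ĉ_I}; and (ii) consequently, if P{k-max(T_i : i ∈ I) > ĉ_I} ≤ α for a given α ∈ (0,1), then the probability of rejecting at least k indices in I (the k-FWER)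 is at most α. -/
open MeasureTheory Filter

/-! Consider the first step after which at least `k` true hypotheses are rejected. Before it,
fewer than `k` indices of `I` had been rejected, so `I` is contained in some `A_j ∪ I'` with
`I' ⊆ R_j`, `|I'| = k - 1`; by monotonicity every critical value used up to that step is at least
`ĉ_I`. Hence at least `k` of the `T_i`, `i ∈ I`, exceed `ĉ_I`, i.e. `k-max(T_i : i ∈ I) > ĉ_I`.
Both claims then follow from monotonicity of `P`. -/

theorem List.Pairwise.countP_lt_le_length_sub {α : Type*} [LinearOrder α] {l : List α}
    (hl : l.Pairwise (· ≤ ·)) {i : ℕ} (hi : i < l.length) {b : α} (hb : l[i] ≤ b) :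
    l.countP (fun x => b < x) ≤ l.length - (i + 1) := by
  have htake : (l.take (i + 1)).countP (fun x => b < x) = 0 := by
    refine List.countP_eq_zero.2 fun a ha => ?_
    obtain ⟨j, hj, rfl⟩ := List.mem_take_iff_getElem.1 ha
    have hji : l[j] ≤ l[i] :=
      hl.rel_get_of_le (a := ⟨j, by omega⟩) (b := ⟨i, hi⟩) (Fin.mk_le_mk.2 (by omega))
    simpa using hji.trans hb
  calc l.countP (fun x => b < x)
      = (l.take (i + 1)).countP (fun x => b < x) + (l.drop (i + 1)).countP (fun x => b < x) := by
        rw [← List.countP_append, List.take_append_drop]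
    _ ≤ (l.drop (i + 1)).length := by rw [htake, zero_add]; exact List.countP_le_length
    _ = l.length - (i + 1) := List.length_drop

theorem lt_kmax_of_le_card_filter_lt {s k : ℕ} (hk : 1 ≤ k) {K : Finset (Fin s)}
    {y : Fin s → ℝ} {b : ℝ} (h : k ≤ (K.filter (fun i => b < y i)).card) : b < kmax k K y := by
  set l := (K.val.map y).sort (· ≤ ·)
  have hKk : k ≤ K.card := h.trans (Finset.card_filter_le _ _)
  have hlen : l.length = K.card := by simp [l]
  have hidx : K.card - k < l.length := by omega
  have hcount : l.countP (fun x => b < x) = (K.filter (fun i => b < y i)).card := by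
    rw [← Multiset.coe_countP, Multiset.sort_eq, Multiset.countP_map, Finset.card_def,
      Finset.filter_val]
  rw [kmax, List.getD_eq_getElem _ _ hidx]
  by_contra! hle
  have hsorted : l.Pairwise (· ≤ ·) := Multiset.pairwise_sort _ _
  have := hsorted.countP_lt_le_length_sub hidx hle
  omega

theorem le_dcrit_s1 {s k : ℕ} {c : Finset (Fin s) → ℝ} {I R : Finset (Fin s)}
    (hmono : ∀ K, I ⊆ K → c I ≤ c K) (hRI : (R ∩ I).card ≤ k - 1) (hR : k - 1 ≤ R.card) :
    c I ≤ dcrit k c R := by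
  -- extend `R ∩ I` to a `(k - 1)`-subset `I'` of `R`, so that `I ⊆ Rᶜ ∪ I'`
  obtain ⟨I', hRI', hI'R, hI'⟩ :=
    Finset.exists_subsuperset_card_eq (Finset.inter_subset_left : R ∩ I ⊆ R) hRI hR
  have hI : I ⊆ Rᶜ ∪ I' := fun i hi => by
    by_cases hiR : i ∈ R
    · exact Finset.mem_union_right _ (hRI' (Finset.mem_inter.2 ⟨hiR, hi⟩))
    · exact Finset.mem_union_left _ (Finset.mem_compl.2 hiR)
  have hbdd : BddAbove {x : ℝ | ∃ J ⊆ R, J.card = k - 1 ∧ x = c (Rᶜ ∪ J)} :=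
    (Set.finite_range c).subset (by rintro _ ⟨J, -, -, rfl⟩; exact ⟨_, rfl⟩) |>.bddAbove
  exact (hmono _ hI).trans (le_csSup hbdd ⟨I', hI'R, hI', rfl⟩)

section StepDown

variable {s k : ℕ} {c : Finset (Fin s) → ℝ} {T : Fin s → ℝ} {I R : Finset (Fin s)}

theorem lt_of_mem_stepDownNext (hmono : ∀ K, I ⊆ K → c I ≤ c K) (hRI : (R ∩ I).card < k)
    {i : Fin s} (hi : i ∈ stepDownNext k c T R) (hiR : i ∉ R) : c I < T i := by
  unfold stepDownNext at hi
  split_ifs at hi with hR₀ hRk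
  · exact (hmono _ (Finset.subset_univ I)).trans_lt (Finset.mem_filter.1 hi).2
  · exact absurd hi hiR
  · rcases Finset.mem_union.1 hi with hi | hi
    · exact absurd hi hiR
    · exact (le_dcrit_s1 hmono (by omega) (by omega)).trans_lt (Finset.mem_filter.1 hi).2

theorem lt_of_mem_iterate_stepDownNext (hmono : ∀ K, I ⊆ K → c I ≤ c K) (m : ℕ)
    (hbefore : ∀ j < m, ((stepDownNext k c T)^[j] ∅ ∩ I).card < k)
    {i : Fin s} (hi : i ∈ (stepDownNext k c T)^[m] ∅) : c I < T i := by
  induction m with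
  | zero => simp at hi
  | succ m ih =>
    rw [Function.iterate_succ_apply'] at hi
    by_cases hiR : i ∈ (stepDownNext k c T)^[m] ∅
    · exact ih (fun j hj => hbefore j (by omega)) hiR
    · exact lt_of_mem_stepDownNext hmono (hbefore m (by omega)) hi hiR

theorem lt_kmax_of_le_card_stepDownRejections_inter (hk : 1 ≤ k)
    (hmono : ∀ K, I ⊆ K → c I ≤ c K) (h : k ≤ (stepDownRejections k c T ∩ I).card) :
    c I < kmax k I T := by
  classical
  have hex : ∃ m, k ≤ ((stepDownNext k c T)^[m] ∅ ∩ I).card := ⟨s, h⟩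
  have hbefore : ∀ j < Nat.find hex, ((stepDownNext k c T)^[j] ∅ ∩ I).card < k :=
    fun j hj => not_le.1 (Nat.find_min hex hj)
  refine lt_kmax_of_le_card_filter_lt hk ((Nat.find_spec hex).trans (Finset.card_le_card ?_))
  intro i hi
  obtain ⟨hiR, hiI⟩ := Finset.mem_inter.1 hi
  exact Finset.mem_filter.2 ⟨hiI, lt_of_mem_iterate_stepDownNext hmono _ hbefore hiR⟩

end StepDown

theorem stmt1_general {Ω : Type*} [MeasurableSpace Ω] (P : Measure Ω)
    {s k : ℕ} (hk1 : 1 ≤ k) (I : Finset (Fin s)) (T : Fin s → Ω → ℝ) (c : Finset (Fin s) → Ω → ℝ)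
    (hmono : ∀ ω : Ω, ∀ K : Finset (Fin s), I ⊆ K → c I ω ≤ c K ω)
    (α : ℝ) :
    P {ω | k ≤ ((stepDownRejections k (fun K => c K ω) (fun i => T i ω)) ∩ I).card}
        ≤ P {ω | c I ω < kmax k I (fun i => T i ω)} ∧
      (P {ω | c I ω < kmax k I (fun i => T i ω)} ≤ ENNReal.ofReal α →
        P {ω | k ≤ ((stepDownRejections k (fun K => c K ω) (fun i => T i ω)) ∩ I).card}
          ≤ ENNReal.ofReal α) := by
  have hfwer : P {ω | k ≤ ((stepDownRejections k (fun K => c K ω) (fun i => T i ω)) ∩ I).card}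
      ≤ P {ω | c I ω < kmax k I (fun i => T i ω)} :=
    measure_mono fun ω hω => lt_kmax_of_le_card_stepDownRejections_inter hk1 (hmono ω) hω
  exact ⟨hfwer, hfwer.trans⟩

/-- Theorem 2.1: (i) the probability that the step-down procedure rejects at
least `k` indices in `I` is at most `P{k-max(T_i : i ∈ I) > ĉ_I}`; (ii) hence if the latter
probability is at most `α`, the `k`-FWER is at most `α`. -/
theorem stmt1 {Ω : Type*} [MeasurableSpace Ω] (P : Measure Ω) [IsProbabilityMeasure P]
    {s k : ℕ} (hs : 1 ≤ s) (hk1 : 1 ≤ k) (hks : k ≤ s)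
    (I : Finset (Fin s)) (hI : k ≤ I.card)
    (T : Fin s → Ω → ℝ) (hT : ∀ i, Measurable (T i))
    (c : Finset (Fin s) → Ω → ℝ) (hc : ∀ K, Measurable (c K))
    (hmono : ∀ ω : Ω, ∀ K : Finset (Fin s), I ⊆ K → c I ω ≤ c K ω)
    (α : ℝ) (hα : α ∈ Set.Ioo (0:ℝ) 1) :
    P {ω | k ≤ ((stepDownRejections k (fun K => c K ω) (fun i => T i ω)) ∩ I).card}
        ≤ P {ω | c I ω < kmax k I (fun i => T i ω)} ∧
      (P {ω | c I ω < kmax k I (fun i => T i ω)} ≤ ENNReal.ofReal α →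
        P {ω | k ≤ ((stepDownRejections k (fun K => c K ω) (fun i => T i ω)) ∩ I).card}
          ≤ ENNReal.ofReal α) :=
  stmt1_general P hk1 I T c hmono α
end

section
/- (Corollary 2.1(i)) Let (X, 𝓧) be a measurable space, Ω a family of probability measures on X, and for i = 1,…,s let ω_i ⊆ Ω be the set of measures under which the null hypothesis H_i is true; assume ∩_{i=1}^s ω_i ≠ ∅. For P ∈ Ω put I(P) = {i : P ∈ ω_i}. Let T_1,…,T_s : X → ℝ be measurable test statistics, fix α ∈ (0,1) and 1 ≤ k ≤ s, and assume that for every K ⊆ {1,…,s} with |K| ≥ k the supremum c_K := sup{ q_{1−α}( law under P of k-max(T_i : i ∈ K) ) : P ∈ ∩_{i∈K} ω_i } is a (finite) real number, and that c_K ≥ c_{I(P)} whenever P ∈ Ω has |I(P)| ≥ k and K ⊇ I(P). Then for every P ∈ Ω, the step-down procedure (Algorithm 2.1) with statistics T_i and nonrandom critical values ĉ_K = c_K satisfies P{at least k indices in I(P) are rejected} ≤ α. -/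
/-!
Let `I = I(P)`. While fewer than `k` indices of `I` have been rejected, every critical value
the procedure uses is at least `c_I`: at step one because `c_univ ≥ c_I`, and later because
some admissible `I' ⊆ R_j` with `|I'| = k - 1` contains `R_j ∩ I`, so `A_j ∪ I' ⊇ I`.
Hence every rejected index of `I` up to that point has `T_i > c_I`, and rejecting `k` of them
forces `k-max(T_i : i ∈ I) > c_I ≥ q_{1-α}`, an event of `P`-probability at most `α`.
-/

open MeasureTheory Filter

open scoped Classical in
/-- The (finite) set `I(P)` of indices of true null hypotheses under `P`. -/
noncomputable def trueSet {X : Type*} [MeasurableSpace X] {s : ℕ}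
    (ω : Fin s → Set (Measure X)) (P : Measure X) : Finset (Fin s) :=
  Finset.univ.filter fun i => P ∈ ω i

open ProbabilityTheory

lemma mem_trueSet {X : Type*} [MeasurableSpace X] {s : ℕ} (ω : Fin s → Set (Measure X))
    (P : Measure X) (i : Fin s) : i ∈ trueSet ω P ↔ P ∈ ω i := by
  simp [trueSet]

lemma quantile_eq_sInf_cdf (μ : Measure ℝ) [IsProbabilityMeasure μ] (β : ℝ) :
    quantile μ β = sInf {x | β ≤ cdf μ x} := by
  simp only [quantile, ← ofReal_cdf, ENNReal.ofReal_le_ofReal_iff (cdf_nonneg μ _)]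

lemma le_cdf_quantile (μ : Measure ℝ) [IsProbabilityMeasure μ] {β : ℝ} (hβ : β < 1) :
    β ≤ cdf μ (quantile μ β) := by
  have hS : {x | β ≤ cdf μ x}.Nonempty :=
    ((tendsto_cdf_atTop μ).eventually_const_le hβ).exists
  rw [quantile_eq_sInf_cdf]
  refine ge_of_tendsto (((cdf μ).right_continuous _).mono_left
    (nhdsWithin_mono _ Set.Ioi_subset_Ici_self)) ?_
  refine eventually_nhdsWithin_of_forall fun x hx => ?_
  obtain ⟨y, hy, hyx⟩ := exists_lt_of_csInf_lt hS hx
  exact hy.trans (monotone_cdf μ hyx.le)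

lemma measure_Ioi_quantile_le (μ : Measure ℝ) [IsProbabilityMeasure μ] {β : ℝ} (hβ : β < 1) :
    μ (Set.Ioi (quantile μ β)) ≤ ENNReal.ofReal (1 - β) := by
  rw [← ofReal_measureReal, ← Set.compl_Iic, probReal_compl_eq_one_sub measurableSet_Iic,
    ← cdf_eq_real]
  exact ENNReal.ofReal_le_ofReal (by linarith [le_cdf_quantile μ hβ])

lemma List.Pairwise.lt_getElem_iff_length_sub_le_countP {α : Type*} [LinearOrder α]
    {l : List α} (hl : l.Pairwise (· ≤ ·)) {j : ℕ} (hj : j < l.length) (t : α) :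
    t < l[j] ↔ l.length - j ≤ l.countP (t < ·) := by
  have hle : ∀ {i} (hi : i < l.length), i ≤ j → l[i] ≤ l[j] := fun hi hij =>
    hl.rel_get_of_le (a := ⟨_, hi⟩) (b := ⟨j, hj⟩) hij
  have hge : ∀ {i} (hi : i < l.length), j ≤ i → l[j] ≤ l[i] := fun hi hji =>
    hl.rel_get_of_le (a := ⟨j, hj⟩) (b := ⟨_, hi⟩) hji
  constructor
  · intro h
    have hdrop : (l.drop j).countP (t < ·) = (l.drop j).length := by
      refine List.countP_eq_length.2 fun v hv => ?_
      obtain ⟨i, hi, rfl⟩ := List.mem_drop_iff_getElem.1 hv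
      simpa using h.trans_le (hge _ (Nat.le_add_right j i))
    calc l.length - j = (l.drop j).countP (t < ·) := by rw [hdrop, List.length_drop]
      _ ≤ l.countP (t < ·) := (List.drop_sublist j l).countP_le
  · intro h
    by_contra! hjt
    have htake : (l.take (j + 1)).countP (t < ·) = 0 := by
      refine List.countP_eq_zero.2 fun v hv => ?_
      obtain ⟨i, hi, rfl⟩ := List.mem_take_iff_getElem.1 hv
      simpa using (hle _ (by omega)).trans hjt
    have hsplit := congrArg (List.countP (t < ·)) (List.take_append_drop (j + 1) l)
    rw [List.countP_append, htake, zero_add] at hsplit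
    have := List.countP_le_length (p := (t < ·)) (l := l.drop (j + 1))
    rw [List.length_drop] at this
    omega

lemma lt_kmax_iff {s k : ℕ} (hk : 1 ≤ k) {K : Finset (Fin s)} (hkK : k ≤ K.card)
    (y : Fin s → ℝ) (t : ℝ) :
    t < kmax k K y ↔ k ≤ (K.filter fun i => t < y i).card := by
  set l := (K.val.map y).sort (· ≤ ·)
  have hlen : l.length = K.card := by simp [l]
  have hj : K.card - k < l.length := by omega
  have hcount : l.countP (t < ·) = (K.filter fun i => t < y i).card := by
    rw [← Multiset.coe_countP, Multiset.sort_eq, Multiset.countP_map]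
    rfl
  rw [kmax, List.getD_eq_getElem _ _ hj,
    (Multiset.pairwise_sort _ _).lt_getElem_iff_length_sub_le_countP, hcount, hlen]
  omega

lemma measurable_kmax {X : Type*} [MeasurableSpace X] {s k : ℕ} (hk : 1 ≤ k)
    {K : Finset (Fin s)} (hkK : k ≤ K.card) {T : Fin s → X → ℝ} (hT : ∀ i, Measurable (T i)) :
    Measurable fun a => kmax k K (fun i => T i a) := by
  refine measurable_of_Ioi fun t => ?_
  have hcount : Measurable fun a => ∑ i ∈ K, if t < T i a then 1 else 0 :=
    Finset.measurable_sum _ fun i _ =>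
      Measurable.ite (measurableSet_lt measurable_const (hT i)) measurable_const measurable_const
  have hpre : (fun a => kmax k K (fun i => T i a)) ⁻¹' Set.Ioi t =
      (fun a => ∑ i ∈ K, if t < T i a then 1 else 0) ⁻¹' {n | k ≤ n} := by
    ext a
    simp only [Set.mem_preimage, Set.mem_Ioi, Set.mem_ofPred_eq, lt_kmax_iff hk hkK,
      Finset.card_filter]
  rw [hpre]
  exact hcount MeasurableSet.of_discrete

section StepDown

variable {s k : ℕ} {c : Finset (Fin s) → ℝ}

lemma le_dcrit_s2 {G J : Finset (Fin s)} (hJG : J ⊆ G) (hJ : J.card = k - 1) :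
    c (Gᶜ ∪ J) ≤ dcrit k c G := by
  refine le_csSup ((Set.finite_range fun J => c (Gᶜ ∪ J)).subset ?_).bddAbove ⟨J, hJG, hJ, rfl⟩
  rintro x ⟨J', -, -, rfl⟩
  exact ⟨J', rfl⟩

lemma le_dcrit_of_card_inter_lt {I G : Finset (Fin s)} (hmono : ∀ K, I ⊆ K → c I ≤ c K)
    (hG : k ≤ G.card) (hGI : (G ∩ I).card < k) : c I ≤ dcrit k c G := by
  classical
  obtain ⟨J, hGIJ, hJG, hJ⟩ := Finset.exists_subsuperset_card_eq Finset.inter_subset_left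
    (Nat.le_sub_one_of_lt hGI) (k.sub_le 1 |>.trans hG)
  refine (hmono _ fun i hi => ?_).trans (le_dcrit_s2 hJG hJ)
  by_cases hiG : i ∈ G
  · exact Finset.mem_union_right _ (hGIJ (Finset.mem_inter.2 ⟨hiG, hi⟩))
  · exact Finset.mem_union_left _ (Finset.mem_compl.2 hiG)

variable {I : Finset (Fin s)} {Tx : Fin s → ℝ}

lemma stepDownNext_inter_subset (hmono : ∀ K, I ⊆ K → c I ≤ c K)
    (hE : (I.filter fun i => c I < Tx i).card < k) {G : Finset (Fin s)}
    (hG : G ∩ I ⊆ I.filter fun i => c I < Tx i) :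
    stepDownNext k c Tx G ∩ I ⊆ I.filter fun i => c I < Tx i := by
  intro i hi
  obtain ⟨hiR, hiI⟩ := Finset.mem_inter.1 hi
  refine Finset.mem_filter.2 ⟨hiI, ?_⟩
  unfold stepDownNext at hiR
  split_ifs at hiR with _ hGk
  · exact (hmono _ I.subset_univ).trans_lt (Finset.mem_filter.1 hiR).2
  · exact (Finset.mem_filter.1 (hG (Finset.mem_inter.2 ⟨hiR, hiI⟩))).2
  · rcases Finset.mem_union.1 hiR with hiG | hnew
    · exact (Finset.mem_filter.1 (hG (Finset.mem_inter.2 ⟨hiG, hiI⟩))).2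
    · refine (le_dcrit_of_card_inter_lt hmono (not_lt.1 hGk) ?_).trans_lt
        (Finset.mem_filter.1 hnew).2
      exact (Finset.card_le_card hG).trans_lt hE

lemma le_card_filter_of_le_card_stepDownRejections_inter (hmono : ∀ K, I ⊆ K → c I ≤ c K)
    (h : k ≤ (stepDownRejections k c Tx ∩ I).card) :
    k ≤ (I.filter fun i => c I < Tx i).card := by
  by_contra! hE
  have hsub : ∀ n, (stepDownNext k c Tx)^[n] ∅ ∩ I ⊆ I.filter fun i => c I < Tx i := by
    intro n
    induction n with
    | zero => simp
    | succ n ih =>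
      rw [Function.iterate_succ_apply']
      exact stepDownNext_inter_subset hmono hE ih
  exact (h.trans (Finset.card_le_card (hsub s))).not_gt hE

end StepDown

theorem stmt2_general {X : Type*} [MeasurableSpace X] {s k : ℕ}
    (hk1 : 1 ≤ k)
    (Ωs : Set (Measure X)) (ω : Fin s → Set (Measure X))
    (hprob : ∀ P ∈ Ωs, IsProbabilityMeasure P)
    (T : Fin s → X → ℝ) (hT : ∀ i, Measurable (T i))
    (α : ℝ) (hα : α ∈ Set.Ioo (0:ℝ) 1)
    (c : Finset (Fin s) → ℝ)
    (hc : ∀ K : Finset (Fin s), k ≤ K.card →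
      IsLUB {x : ℝ | ∃ P : Measure X, (∀ i ∈ K, P ∈ ω i) ∧
        x = quantile (Measure.map (fun a => kmax k K (fun i => T i a)) P) (1 - α)} (c K))
    (hmono : ∀ P ∈ Ωs, k ≤ (trueSet ω P).card →
      ∀ K : Finset (Fin s), trueSet ω P ⊆ K → c (trueSet ω P) ≤ c K) :
    ∀ P ∈ Ωs,
      P {x | k ≤ ((stepDownRejections k c (fun i => T i x)) ∩ trueSet ω P).card}
        ≤ ENNReal.ofReal α := by
  intro P hP
  set I := trueSet ω P
  by_cases hkI : k ≤ I.card
  swap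
  · exact (measure_mono_null (fun x hx => hkI (le_trans hx
      (Finset.card_le_card Finset.inter_subset_right))) measure_empty).trans_le zero_le
  have := hprob P hP
  set f := fun a => kmax k I (fun i => T i a)
  have hf : Measurable f := measurable_kmax hk1 hkI hT
  have := Measure.isProbabilityMeasure_map (μ := P) hf.aemeasurable
  set q := quantile (P.map f) (1 - α)
  have hqc : q ≤ c I := (hc I hkI).1 ⟨P, fun i => (mem_trueSet ω P i).1, rfl⟩
  calc P {x | k ≤ (stepDownRejections k c (fun i => T i x) ∩ I).card}
      ≤ P (f ⁻¹' Set.Ioi q) := measure_mono fun x hx => hqc.trans_lt <|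
        (lt_kmax_iff hk1 hkI _ _).2 (le_card_filter_of_le_card_stepDownRejections_inter
          (hmono P hP hkI) hx)
    _ = P.map f (Set.Ioi q) := (Measure.map_apply hf measurableSet_Ioi).symm
    _ ≤ ENNReal.ofReal (1 - (1 - α)) := measure_Ioi_quantile_le _ (by linarith [hα.1])
    _ = ENNReal.ofReal α := by rw [sub_sub_cancel]

/-- Corollary 2.1(i): the step-down procedure with the nonrandom critical
values `c_K = sup { q_{1-α}(law of k-max(T_i : i ∈ K) under P) : P ∈ ∩_{i∈K} ω_i }`,
assumed finite and monotone, controls the `k`-FWER at level `α`. -/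
theorem stmt2 {X : Type*} [MeasurableSpace X] {s k : ℕ}
    (hs : 1 ≤ s) (hk1 : 1 ≤ k) (hks : k ≤ s)
    (Ωs : Set (Measure X)) (ω : Fin s → Set (Measure X))
    (hsub : ∀ i, ω i ⊆ Ωs)
    (hprob : ∀ P ∈ Ωs, IsProbabilityMeasure P)
    (hne : (⋂ i, ω i).Nonempty)
    (T : Fin s → X → ℝ) (hT : ∀ i, Measurable (T i))
    (α : ℝ) (hα : α ∈ Set.Ioo (0:ℝ) 1)
    (c : Finset (Fin s) → ℝ)
    (hc : ∀ K : Finset (Fin s), k ≤ K.card →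
      IsLUB {x : ℝ | ∃ P : Measure X, (∀ i ∈ K, P ∈ ω i) ∧
        x = quantile (Measure.map (fun a => kmax k K (fun i => T i a)) P) (1 - α)} (c K))
    (hmono : ∀ P ∈ Ωs, k ≤ (trueSet ω P).card →
      ∀ K : Finset (Fin s), trueSet ω P ⊆ K → c (trueSet ω P) ≤ c K) :
    ∀ P ∈ Ωs,
      P {x | k ≤ ((stepDownRejections k c (fun i => T i x)) ∩ trueSet ω P).card}
        ≤ ENNReal.ofReal α :=
  stmt2_general hk1 Ωs ω hprob T hT α hα c hc hmono
end

section
/- (Single-step generalized Bonferroni control of the k-FWER) Let (Ω, 𝓕, P) be a probability space, let p̂_1,…,p̂_s be random variables with values in [0,1], let I ⊆ {1,…,s} be the set of indices of true null hypotheses, and assume that for every i ∈ I and every u ∈ [0,1], P{p̂_i ≤ u} ≤ u. Fix 1 ≤ k ≤ s and α ∈ (0,1). Then the procedure that rejects H_i if and only if p̂_i ≤ kα/s makes at least k false rejections with probability at most α: P{ |{ i ∈ I : p̂_i ≤ kα/s }| ≥ k } ≤ α. -/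
open MeasureTheory Filter Topology

/-! Markov's inequality for the number `N = ∑_{i ∈ I} 1{p̂_i ≤ u}` of false rejections gives
`k · P{N ≥ k} ≤ E N = ∑_{i ∈ I} P{p̂_i ≤ u} ≤ s u`, and `s u = k α` for `u = k α / s`. -/

open scoped ENNReal

theorem natCast_mul_measure_le_card_filter_mem_le_sum {Ω ι : Type*} [MeasurableSpace Ω]
    (μ : Measure Ω) (I : Finset ι) {B : ι → Set Ω} [∀ ω, DecidablePred fun i => ω ∈ B i]
    (hB : ∀ i ∈ I, NullMeasurableSet (B i) μ) (k : ℕ) :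
    k * μ {ω | k ≤ (I.filter (fun i => ω ∈ B i)).card} ≤ ∑ i ∈ I, μ (B i) := by
  have hind : ∀ i ∈ I, AEMeasurable ((B i).indicator (1 : Ω → ℝ≥0∞)) μ :=
    fun i hi => aemeasurable_const.indicator₀ (hB i hi)
  have hcount : ∀ ω, ∑ i ∈ I, (B i).indicator 1 ω = ((I.filter (fun i => ω ∈ B i)).card : ℝ≥0∞) :=
    fun ω => by simp [Set.indicator_apply]
  calc k * μ {ω | k ≤ (I.filter (fun i => ω ∈ B i)).card}
      = k * μ {ω | (k : ℝ≥0∞) ≤ ∑ i ∈ I, (B i).indicator 1 ω} := by simp only [hcount, Nat.cast_le]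
    _ ≤ ∫⁻ ω, ∑ i ∈ I, (B i).indicator 1 ω ∂μ :=
        mul_meas_ge_le_lintegral₀ (Finset.aemeasurable_fun_sum I hind) k
    _ = ∑ i ∈ I, μ (B i) := by
        rw [lintegral_finsetSum' I hind]
        exact Finset.sum_congr rfl fun i hi => lintegral_indicator_one₀ (hB i hi)

theorem stmt16_general {Ω : Type*} [MeasurableSpace Ω] (P : Measure Ω)
    {s k : ℕ} (hk1 : 1 ≤ k) (hks : k ≤ s)
    (phat : Fin s → Ω → ℝ) (hmeas : ∀ i, Measurable (phat i))
    (I : Finset (Fin s))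
    (hp : ∀ i ∈ I, ∀ u ∈ Set.Icc (0:ℝ) 1, P {ω | phat i ω ≤ u} ≤ ENNReal.ofReal u)
    (α : ℝ) (hα : α ∈ Set.Ioo (0:ℝ) 1) :
    P {ω | k ≤ (I.filter (fun i => phat i ω ≤ (k : ℝ) * α / s)).card}
      ≤ ENNReal.ofReal α := by
  set u : ℝ := (k : ℝ) * α / s
  have hs : (0 : ℝ) < s := by exact_mod_cast hk1.trans hks
  have hu : u ∈ Set.Icc (0 : ℝ) 1 := by
    refine ⟨by have := hα.1; positivity, (div_le_one hs).2 ?_⟩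
    calc (k : ℝ) * α ≤ s * 1 := mul_le_mul (by exact_mod_cast hks) hα.2.le hα.1.le hs.le
      _ = s := mul_one _
  have hbonf := natCast_mul_measure_le_card_filter_mem_le_sum P I (B := fun i => {ω | phat i ω ≤ u})
    (fun i _ => (measurableSet_le (hmeas i) measurable_const).nullMeasurableSet) k
  have hsum : ∑ i ∈ I, P {ω | phat i ω ≤ u} ≤ k * ENNReal.ofReal α := calc
    ∑ i ∈ I, P {ω | phat i ω ≤ u} ≤ ∑ _i ∈ I, ENNReal.ofReal u :=
        Finset.sum_le_sum fun i hi => hp i hi u hu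
    _ = I.card * ENNReal.ofReal u := by rw [Finset.sum_const, nsmul_eq_mul]
    _ ≤ s * ENNReal.ofReal u := by
        gcongr
        simpa using Finset.card_le_univ I
    _ = k * ENNReal.ofReal α := by
        rw [← ENNReal.ofReal_natCast, ← ENNReal.ofReal_mul hs.le, ← ENNReal.ofReal_natCast,
          ← ENNReal.ofReal_mul (Nat.cast_nonneg k), mul_div_cancel₀ _ hs.ne']
  exact (ENNReal.mul_le_mul_iff_right (by positivity) (ENNReal.natCast_ne_top k)).1
    (hbonf.trans hsum)

/-- single-step generalized Bonferroni control of the `k`-FWER: if the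
`p`-values corresponding to true hypotheses `i ∈ I` are valid, then the procedure rejecting
`H_i` iff `p̂_i ≤ kα/s` makes at least `k` false rejections with probability at most `α`. -/
theorem stmt16 {Ω : Type*} [MeasurableSpace Ω] (P : Measure Ω) [IsProbabilityMeasure P]
    {s k : ℕ} (hk1 : 1 ≤ k) (hks : k ≤ s)
    (phat : Fin s → Ω → ℝ) (hmeas : ∀ i, Measurable (phat i))
    (hrange : ∀ i ω, phat i ω ∈ Set.Icc (0:ℝ) 1)
    (I : Finset (Fin s))
    (hp : ∀ i ∈ I, ∀ u ∈ Set.Icc (0:ℝ) 1, P {ω | phat i ω ≤ u} ≤ ENNReal.ofReal u)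
    (α : ℝ) (hα : α ∈ Set.Ioo (0:ℝ) 1) :
    P {ω | k ≤ (I.filter (fun i => phat i ω ≤ (k : ℝ) * α / s)).card}
      ≤ ENNReal.ofReal α :=
  stmt16_general P hk1 hks phat hmeas I hp α hα
end

section
/- (Appendix B: the single-hypothesis empirical Bayes procedure is anti-conservative under the null) Let Φ and φ denote the cumulative distribution function and the density of the standard normal distribution on ℝ, and fix α ∈ (0, 1/2). For t ∈ ℝ define π(t) = 1 if t ≤ 0 and π(t) = φ(t)/φ(0) if t > 0, and say that t is rejected if π(t)·(1 − Φ(t)) < α (equivalently, t exceeds the cutoff c(t) = Φ^{-1}(1 − α/π(t)), interpreted as −∞ when α/π(t) ≥ 1). If T is a standard normal random variable, then the rejection probability strictly exceeds α: P{ π(T)·(1 − Φ(T)) < α } > α. -/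
open MeasureTheory Filter Topology

/-!
Let `F` be the standard normal CDF and `w t = φ(t)/φ(0)`, so that `π = w` on `(0, ∞)`.
On `[0, ∞)` the map `g t = w t (1 - F t)` is continuous, decreasing, equal to `1/2 > α` at `0`
and tending to `0`, so it crosses `α` at some cutoff `c > 0`, and every `t > c` is rejected.
At the cutoff `1 - F c = α / w c > α` because `w c < 1`, hence `P(T > c) > α`.
-/

open Set ProbabilityTheory

lemma continuous_cdf (μ : Measure ℝ) [IsProbabilityMeasure μ] [NullSingletonClass μ] :
    Continuous (cdf μ) := by
  refine continuous_iff_continuousAt.2 fun x ↦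
    (monotone_cdf μ).continuousAt_iff_leftLim_eq_rightLim.2 ?_
  have h := (cdf μ).measure_singleton x
  rw [measure_cdf, measure_singleton, eq_comm, ENNReal.ofReal_eq_zero, sub_nonpos] at h
  rw [(cdf μ).rightLim_eq]
  exact le_antisymm ((monotone_cdf μ).leftLim_le le_rfl) h

lemma cdf_gaussianReal_zero {v : NNReal} (hv : v ≠ 0) : cdf (gaussianReal 0 v) 0 = 1 / 2 := by
  have := nullSingletonClass_gaussianReal (μ := 0) hv
  have hsymm : gaussianReal 0 v (Iic 0) = gaussianReal 0 v (Ioi 0) := by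
    conv_lhs => rw [← neg_zero, ← gaussianReal_map_neg,
      Measure.map_apply measurable_neg measurableSet_Iic]
    simp [measure_congr Ioi_ae_eq_Ici]
  have hcompl := probReal_compl_eq_one_sub (μ := gaussianReal 0 v) (measurableSet_Iic (a := 0))
  rw [compl_Iic, measureReal_def, ← hsymm, ← measureReal_def] at hcompl
  rw [cdf_eq_real]
  linarith

lemma gaussianPDFReal_strictAntiOn {μ : ℝ} {v : NNReal} (hv : v ≠ 0) :
    StrictAntiOn (gaussianPDFReal μ v) (Ici μ) := by
  intro s hs t ht hst
  have : 0 < (v : ℝ) := by positivity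
  simp only [gaussianPDFReal_def]
  gcongr
  exact sub_nonneg.2 hs

section WeightedTail

variable {μ : Measure ℝ} {w : ℝ → ℝ} {α : ℝ}

lemma exists_pos_mul_one_sub_cdf_eq (hμ : Continuous (cdf μ)) (hw : ContinuousOn w (Ici 0))
    (hw_anti : AntitoneOn w (Ici 0)) (hw0 : w 0 = 1) (hα : 0 < α) (hα0 : α < 1 - cdf μ 0) :
    ∃ c, 0 < c ∧ w c * (1 - cdf μ c) = α := by
  have htail : ∀ᶠ t in atTop, 1 - cdf μ t < α := by
    have := (tendsto_cdf_atTop μ).const_sub 1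
    rw [sub_self] at this
    exact this.eventually (gt_mem_nhds hα)
  obtain ⟨b, hbα, hb⟩ := (htail.and (eventually_ge_atTop 0)).exists
  have hgb : w b * (1 - cdf μ b) < α := by
    have hwb : w b ≤ 1 := hw0 ▸ hw_anti self_mem_Ici hb hb
    nlinarith [cdf_le_one μ b]
  obtain ⟨c, hc, hgc⟩ := intermediate_value_Icc' hb
    ((hw.mul (continuous_const.sub hμ).continuousOn).mono Icc_subset_Ici_self)
    ⟨hgb.le, by simpa [hw0] using hα0.le⟩
  refine ⟨c, hc.1.lt_of_ne ?_, hgc⟩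
  rintro rfl
  simp only [Pi.mul_apply, Pi.sub_apply, hw0, one_mul] at hgc
  linarith

theorem ofReal_lt_measure_mul_one_sub_cdf_lt [IsProbabilityMeasure μ] (hμ : Continuous (cdf μ))
    (hw : ContinuousOn w (Ici 0)) (hw_anti : StrictAntiOn w (Ici 0)) (hw0 : w 0 = 1)
    (hα : 0 < α) (hα0 : α < 1 - cdf μ 0) :
    ENNReal.ofReal α < μ {t | 0 < t ∧ w t * (1 - cdf μ t) < α} := by
  obtain ⟨c, hc, hgc⟩ :=
    exists_pos_mul_one_sub_cdf_eq hμ hw hw_anti.antitoneOn hw0 hα hα0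
  have hwc : w c < 1 := hw0 ▸ hw_anti self_mem_Ici hc.le hc
  have htail : α < 1 - cdf μ c := by
    have hF : 0 ≤ 1 - cdf μ c := sub_nonneg.2 (cdf_le_one μ c)
    have hpos : 0 < 1 - cdf μ c :=
      pos_of_mul_pos_right (hgc ▸ hα) (pos_of_mul_pos_left (hgc ▸ hα) hF).le
    nlinarith [mul_pos (sub_pos.2 hwc) hpos]
  have hsub : Ioi c ⊆ {t | 0 < t ∧ w t * (1 - cdf μ t) < α} := by
    intro t (ht : c < t)
    have hwt : w t < w c := hw_anti hc.le (hc.trans ht).le ht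
    have hF : cdf μ c ≤ cdf μ t := monotone_cdf μ ht.le
    refine ⟨hc.trans ht, ?_⟩
    rcases le_or_gt 0 (w t) with hwt_nonneg | hwt_neg
    · nlinarith [cdf_le_one μ t]
    · nlinarith [cdf_le_one μ t]
  calc ENNReal.ofReal α < ENNReal.ofReal (1 - cdf μ c) :=
        (ENNReal.ofReal_lt_ofReal_iff_of_nonneg hα.le).2 htail
    _ = μ (Ioi c) := by
        rw [← compl_Iic, prob_compl_eq_one_sub measurableSet_Iic, ← ofReal_cdf,
          ENNReal.ofReal_sub _ (cdf_nonneg μ c), ENNReal.ofReal_one]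
    _ ≤ _ := measure_mono hsub

end WeightedTail

/-- Appendix B: for `T` standard normal, the single-hypothesis empirical
Bayes procedure, which rejects when `π(T)(1 - Φ(T)) < α` with `π(t) = 1` for `t ≤ 0` and
`π(t) = φ(t)/φ(0)` for `t > 0`, has rejection probability strictly greater than `α`. -/
theorem stmt18 (α : ℝ) (hα : α ∈ Set.Ioo (0:ℝ) (1/2)) :
    ENNReal.ofReal α <
      gaussianReal 0 1 {t : ℝ |
        (if t ≤ 0 then (1:ℝ) else gaussianPDFReal 0 1 t / gaussianPDFReal 0 1 0) *
          (1 - ((gaussianReal 0 1) (Set.Iic t)).toReal) < α} := by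
  obtain ⟨hα0, hα2⟩ := hα
  have := nullSingletonClass_gaussianReal (μ := 0) (v := 1) one_ne_zero
  have hφ0 : 0 < gaussianPDFReal 0 1 0 := gaussianPDFReal_pos 0 1 0 one_ne_zero
  have hw_cont : ContinuousOn (fun t ↦ gaussianPDFReal 0 1 t / gaussianPDFReal 0 1 0) (Ici 0) :=
    by simp only [gaussianPDFReal_def]; fun_prop
  have hw_anti : StrictAntiOn (fun t ↦ gaussianPDFReal 0 1 t / gaussianPDFReal 0 1 0) (Ici 0) :=
    fun s hs t ht hst ↦
      div_lt_div_of_pos_right (gaussianPDFReal_strictAntiOn one_ne_zero hs ht hst) hφ0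
  refine (ofReal_lt_measure_mul_one_sub_cdf_lt (continuous_cdf _) hw_cont hw_anti
    (div_self hφ0.ne') hα0 ?_).trans_le (measure_mono ?_)
  · rw [cdf_gaussianReal_zero one_ne_zero]
    linarith
  · rintro t ⟨ht, hrej⟩
    simpa [ht.not_ge, cdf_eq_real, measureReal_def] using hrej
end
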